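/- Let (G, L, c, r, e_r) be a rooted WRAP instance with a non-shortenable directed WRAP solution F⃗, let v ∈ V \ {r}, and let 𝒳_v be a finite set of pairwise disjoint festoons whose festoon intervals {I_X : X ∈ 𝒳_v} form a laminar family, such that 𝒳_v connects v to a v-good vertex but no proper subset of 𝒳_v connects v to a v-good vertex. Then the festoons in 𝒳_v can be numbered X_1, X_2, …, X_p with X_1 ≺ X_2 ≺ … ≺ X_p (i.e., I_{X_1} ⊊ I_{X_2} ⊊ … ⊊ I_{X_p}); moreover, (1) X_i and X_j are tangled if and only if |i − j| = 1, (2) X_1 is the only festoon in 𝒳_v containing a link incident to v, and (3) X_p is the only festoon in 𝒳_v containing a link incident to a v-good vertex. -/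

import Mathlib

/-!
Common definitions for the Weighted Ring Augmentation Problem (WRAP).

A rooted WRAP instance `(G, L, c, r, e_r)` has a ring graph `G` whose
vertices we identify with `Fin n`, numbered `r = 0, 1, …, n-1` in the order
in which they appear along the path `(V, E \ {e_r})` starting at the root
`r = 0`.  Vertex `i` is to the left of `j` iff `i < j`.
-/

/-- An undirected link: an unordered pair of distinct vertices of the ring,
recorded via its left endpoint `lo` and its right endpoint `hi`. -/
structure Link (n : ℕ) where
  lo : Fin n
  hi : Fin n
  lo_lt_hi : lo < hi

instance {n : ℕ} : DecidableEq (Link n) := fun a b =>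
  decidable_of_iff (a.lo = b.lo ∧ a.hi = b.hi) (by cases a; cases b; simp)

/-- A directed link: an ordered pair of distinct vertices. -/
structure DLink (n : ℕ) where
  tail : Fin n
  head : Fin n
  ne : tail ≠ head

instance {n : ℕ} : DecidableEq (DLink n) := fun a b =>
  decidable_of_iff (a.tail = b.tail ∧ a.head = b.head) (by cases a; cases b; simp)

variable {n : ℕ}

/-- The underlying undirected link of a directed link. -/
def DLink.toLink (d : DLink n) : Link n :=
  ⟨min d.tail d.head, max d.tail d.head, min_lt_max.mpr d.ne⟩

/-- `ℓ` is incident to `v`. -/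
def Link.Incident (ℓ : Link n) (v : Fin n) : Prop := ℓ.lo = v ∨ ℓ.hi = v

/-- The 2-cuts `C_G` of the ring: the nonempty intervals of consecutive
vertices along the path `(V, E \ {e_r})` that do not contain the root `0`. -/
def IsCut [NeZero n] (C : Finset (Fin n)) : Prop :=
  ∃ a b : Fin n, 0 < a ∧ a ≤ b ∧ C = Finset.Icc a b

/-- `ℓ` has exactly one endpoint in `C`. -/
def crossesCut (ℓ : Link n) (C : Finset (Fin n)) : Prop :=
  (ℓ.lo ∈ C ∧ ℓ.hi ∉ C) ∨ (ℓ.lo ∉ C ∧ ℓ.hi ∈ C)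

instance (ℓ : Link n) (C : Finset (Fin n)) : Decidable (crossesCut ℓ C) := by
  unfold crossesCut; infer_instance

/-- `δ_K(C)`: the links of `K` with exactly one endpoint in `C`. -/
def cutLinks (K : Finset (Link n)) (C : Finset (Fin n)) : Finset (Link n) :=
  K.filter (fun ℓ => crossesCut ℓ C)

/-- An (undirected) WRAP solution: every 2-cut is covered by some link. -/
def IsSolution [NeZero n] (S : Finset (Link n)) : Prop :=
  ∀ C : Finset (Fin n), IsCut C → (cutLinks S C).Nonempty

/-- A directed link covers a 2-cut if it enters it. -/
def DCovers (d : DLink n) (C : Finset (Fin n)) : Prop := d.tail ∉ C ∧ d.head ∈ C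

/-- A directed WRAP solution: every 2-cut is entered by some directed link. -/
def IsDirSolution [NeZero n] (F : Finset (DLink n)) : Prop :=
  ∀ C : Finset (Fin n), IsCut C → ∃ d ∈ F, DCovers d C

/-- `d'` is a shortening of `d`: same head, and the tail of `d'` lies on the
unique path between the endpoints of `d` in `(V, E \ {e_r})`. -/
def IsShortening (d' d : DLink n) : Prop :=
  d'.head = d.head ∧ min d.tail d.head ≤ d'.tail ∧ d'.tail ≤ max d.tail d.head

/-- A non-shortenable directed WRAP solution: deleting any link, or replacing
any link by a strict shortening of it, destroys feasibility. -/
def NonShortenable [NeZero n] (F : Finset (DLink n)) : Prop :=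
  IsDirSolution F ∧
    (∀ d ∈ F, ¬ IsDirSolution (F.erase d)) ∧
    (∀ d ∈ F, ∀ d' : DLink n, IsShortening d' d → d' ≠ d →
      ¬ IsDirSolution (insert d' (F.erase d)))

/-- `d` is a shadow of the undirected link `ℓ`: a shortening of one of the two
orientations of `ℓ`. -/
def IsShadow (d : DLink n) (ℓ : Link n) : Prop :=
  (d.head = ℓ.lo ∨ d.head = ℓ.hi) ∧ ℓ.lo ≤ d.tail ∧ d.tail ≤ ℓ.hi

/-- `u` is a descendant of `v` in `(V, F)` (every vertex is a descendant of
itself). -/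
def Descend (F : Finset (DLink n)) (v u : Fin n) : Prop :=
  Relation.ReflTransGen (fun a b => ∃ d ∈ F, d.tail = a ∧ d.head = b) v u

/-- `u` is `v`-good: not a descendant of `v` in `(V, F)`. -/
def VGood (F : Finset (DLink n)) (v u : Fin n) : Prop := ¬ Descend F v u

/-- `w` is the least common ancestor of the vertex set `U` in `(V, F)`. -/
def IsLCA (F : Finset (DLink n)) (w : Fin n) (U : Set (Fin n)) : Prop :=
  (∀ u ∈ U, Descend F w u) ∧ ∀ x : Fin n, (∀ u ∈ U, Descend F x u) → Descend F x w

/-- `d = (u,v)` is responsible for the 2-cut `C`: it covers `C` and no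
directed link of `F` on the `r`–`u` path in the arborescence `(V, F)`
(i.e. no link of `F` whose head is an ancestor of `u`) covers `C`. -/
def Responsible [NeZero n] (F : Finset (DLink n)) (d : DLink n)
    (C : Finset (Fin n)) : Prop :=
  IsCut C ∧ DCovers d C ∧
    ∀ d' ∈ F, Descend F d'.head d.tail → ¬ DCovers d' C

/-- `Drop_F(K)`: directed links of `F` all of whose responsible cuts
are covered by `K`. -/
def Drop [NeZero n] (F : Finset (DLink n)) (K : Finset (Link n)) : Set (DLink n) :=
  {d | d ∈ F ∧ ∀ C : Finset (Fin n), Responsible F d C → (cutLinks K C).Nonempty}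

/-- Two links are crossing: their endpoints interleave along the ring. -/
def Crossing (ℓ f : Link n) : Prop :=
  (ℓ.lo < f.lo ∧ f.lo < ℓ.hi ∧ ℓ.hi < f.hi) ∨
  (f.lo < ℓ.lo ∧ ℓ.lo < f.hi ∧ f.hi < ℓ.hi)

/-- Two links intersect: they share an endpoint or cross. -/
def Intersects (ℓ f : Link n) : Prop :=
  (ℓ.lo = f.lo ∨ ℓ.lo = f.hi ∨ ℓ.hi = f.lo ∨ ℓ.hi = f.hi) ∨ Crossing ℓ f

/-- The vertex `u` is connected to the vertex `w` in the link intersection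
graph `H[K]`: there is a path in `H[K]` from a link incident to `u` to a link
incident to `w`. -/
def ConnVert (K : Finset (Link n)) (u w : Fin n) : Prop :=
  ∃ ℓ ∈ K, ∃ f ∈ K, ℓ.Incident u ∧ f.Incident w ∧
    Relation.ReflTransGen (fun a b => a ∈ K ∧ b ∈ K ∧ Intersects a b) ℓ f

/-- The link intersection graph `H[S]` is connected. -/
def ConnLinkSet (S : Finset (Link n)) : Prop :=
  ∀ ℓ ∈ S, ∀ f ∈ S,
    Relation.ReflTransGen (fun a b => a ∈ S ∧ b ∈ S ∧ Intersects a b) ℓ f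

/-- `V(S)`: the vertices incident to a link of `S`. -/
def linkVerts (S : Finset (Link n)) : Set (Fin n) := {v | ∃ ℓ ∈ S, ℓ.Incident v}

/-- A festoon order: the links (listed as `f 0, f 1, …`) form a path in the
link intersection graph visited in this order, with both left endpoints and
right endpoints strictly increasing. -/
def IsFestoonSeq {p : ℕ} (f : Fin p → Link n) : Prop :=
  (∀ i j : Fin p, i < j → (f i).lo < (f j).lo ∧ (f i).hi < (f j).hi) ∧
  (∀ i j : Fin p, (i : ℕ) + 1 = (j : ℕ) → Intersects (f i) (f j)) ∧
  (∀ i j : Fin p, (i : ℕ) + 1 < (j : ℕ) → ¬ Intersects (f i) (f j))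

/-- A festoon: a nonempty link set admitting a festoon order. -/
def IsFestoon (X : Finset (Link n)) : Prop :=
  ∃ p : ℕ, 0 < p ∧ ∃ f : Fin p → Link n,
    IsFestoonSeq f ∧ X = Finset.image f Finset.univ

/-- The festoon interval `I_X`: the interval from the leftmost endpoint of a
link of `X` to the rightmost endpoint of a link of `X`. -/
def festoonIval (X : Finset (Link n)) : Set (Fin n) :=
  {w | (∃ ℓ ∈ X, ℓ.lo ≤ w) ∧ ∃ ℓ ∈ X, w ≤ ℓ.hi}

/-- Two festoons are tangled: some link of one intersects some link of the
other. -/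
def Tangled (X Y : Finset (Link n)) : Prop :=
  ∃ ℓ ∈ X, ∃ f ∈ Y, Intersects ℓ f

/-- A laminar family of vertex sets: any two members are nested or disjoint. -/
def Laminar (𝓛 : Set (Finset (Fin n))) : Prop :=
  ∀ A ∈ 𝓛, ∀ B ∈ 𝓛, A ⊆ B ∨ B ⊆ A ∨ Disjoint A B

/-- An inclusion-wise maximal laminar subfamily of `C_G`. -/
def MaxLaminarCuts [NeZero n] (𝓛 : Set (Finset (Fin n))) : Prop :=
  (∀ C ∈ 𝓛, IsCut C) ∧ Laminar 𝓛 ∧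
    ∀ C : Finset (Fin n), IsCut C → C ∉ 𝓛 → ¬ Laminar (insert C 𝓛)

/-- An `α`-thin link set. -/
def IsThin [NeZero n] (α : ℕ) (K : Finset (Link n)) : Prop :=
  ∃ 𝓛 : Set (Finset (Fin n)), MaxLaminarCuts 𝓛 ∧ ∀ C ∈ 𝓛, (cutLinks K C).card ≤ α

/-- The set `𝒳` of festoons connects `v` to a `v`-good vertex. -/
def ConnectsToGood (F : Finset (DLink n)) (v : Fin n)
    (𝒳 : Finset (Finset (Link n))) : Prop :=
  ∃ w : Fin n, VGood F v w ∧ ConnVert (𝒳.biUnion id) v w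

/-- The undirected graph obtained from a set of directed links by
disregarding orientations. -/
def undirGraph (F : Finset (DLink n)) : SimpleGraph (Fin n) where
  Adj a b := ∃ d ∈ F, (d.tail = a ∧ d.head = b) ∨ (d.tail = b ∧ d.head = a)
  symm := by
    constructor
    rintro a b ⟨d, hd, h⟩
    exact ⟨d, hd, h.symm⟩
  loopless := by
    constructor
    rintro a ⟨d, hd, h⟩
    rcases h with ⟨h1, h2⟩ | ⟨h1, h2⟩ <;> exact d.ne (h1.trans h2.symm)

/-- A directed link going to the left along the ring. -/
def LeftGoing (d : DLink n) : Prop := d.head < d.tail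

/-- A directed link going to the right along the ring. -/
def RightGoing (d : DLink n) : Prop := d.tail < d.head

/-!
Take a shortest chain of festoons of `𝒳`, consecutive ones tangled, from a link at `v` to a
link at a `v`-good vertex. Minimality of `𝒳` makes the chain exhaust `𝒳`, and shortness makes
it chordless, with only its first festoon touching `v` and only its last one touching a
`v`-good vertex. In a non-shortenable solution the descendants of `v` form an interval, so
every festoon interval but the last consists of `v`-bad vertices. Going down the chain,
laminarity and the missing chords then force the intervals to be strictly nested.
-/

open Relation

/-- Adjacency in the link intersection graph `H[K]`. -/
abbrev IntersectsIn {m : ℕ} (K : Finset (Link m)) (a b : Link m) : Prop :=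
  a ∈ K ∧ b ∈ K ∧ Intersects a b

section Geometry

variable {m : ℕ} {a b c y : Link m} {u : Fin m}

theorem Intersects.symm (h : Intersects a b) : Intersects b a := by
  unfold Intersects Crossing at *
  grind

theorem Intersects.lo_le_hi (h : Intersects a b) : b.lo ≤ a.hi := by
  have := a.lo_lt_hi; have := b.lo_lt_hi
  simp only [Intersects, Crossing, Fin.ext_iff, Fin.lt_def, Fin.le_def] at *
  omega

theorem Intersects.exists_incident_mem_Icc (h : Intersects c a) :
    ∃ u, c.Incident u ∧ a.lo ≤ u ∧ u ≤ a.hi := by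
  have := a.lo_lt_hi; have := c.lo_lt_hi
  have : (a.lo ≤ c.lo ∧ c.lo ≤ a.hi) ∨ (a.lo ≤ c.hi ∧ c.hi ≤ a.hi) := by
    simp only [Intersects, Crossing, Fin.ext_iff, Fin.lt_def, Fin.le_def] at *
    omega
  rcases this with h | h
  exacts [⟨c.lo, Or.inl rfl, h⟩, ⟨c.hi, Or.inr rfl, h⟩]

/-- Two links that do not intersect are disjoint or strictly nested. -/
theorem strictly_inside_of_not_intersects (h : ¬ Intersects c y) (hu : c.Incident u)
    (h1 : y.lo ≤ u) (h2 : u ≤ y.hi) : y.lo < c.lo ∧ c.hi < y.hi := by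
  have := c.lo_lt_hi; have := y.lo_lt_hi
  simp only [Link.Incident, Intersects, Crossing, Fin.ext_iff, Fin.lt_def, Fin.le_def] at *
  omega

end Geometry

section Interval

variable {m : ℕ} {ℓ : Link m} {u w : Fin m} {X Y : Finset (Link m)}

theorem mem_festoonIval (hℓ : ℓ ∈ X) (h1 : ℓ.lo ≤ w) (h2 : w ≤ ℓ.hi) : w ∈ festoonIval X :=
  ⟨⟨ℓ, hℓ, h1⟩, ⟨ℓ, hℓ, h2⟩⟩

theorem lo_mem_festoonIval (hℓ : ℓ ∈ X) : ℓ.lo ∈ festoonIval X :=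
  mem_festoonIval hℓ le_rfl ℓ.lo_lt_hi.le

theorem hi_mem_festoonIval (hℓ : ℓ ∈ X) : ℓ.hi ∈ festoonIval X :=
  mem_festoonIval hℓ ℓ.lo_lt_hi.le le_rfl

theorem Link.Incident.mem_festoonIval (hℓ : ℓ ∈ X) (hu : ℓ.Incident u) :
    u ∈ festoonIval X := by
  rcases hu with rfl | rfl
  exacts [lo_mem_festoonIval hℓ, hi_mem_festoonIval hℓ]

theorem ordConnected_festoonIval (X : Finset (Link m)) : (festoonIval X).OrdConnected :=
  ⟨fun _ ha _ hb _ hw => ⟨ha.1.imp fun _ h => ⟨h.1, h.2.trans hw.1⟩,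
    hb.2.imp fun _ h => ⟨h.1, hw.2.trans h.2⟩⟩⟩

theorem festoonIval_subset_of_incident {s : Set (Fin m)} (hs : s.OrdConnected)
    (h : ∀ ℓ ∈ X, ∀ u, ℓ.Incident u → u ∈ s) : festoonIval X ⊆ s := by
  rintro w ⟨⟨ℓ, hℓ, hlo⟩, ⟨ℓ', hℓ', hhi⟩⟩
  exact hs.out (h ℓ hℓ _ (Or.inl rfl)) (h ℓ' hℓ' _ (Or.inr rfl)) ⟨hlo, hhi⟩

theorem Tangled.symm (h : Tangled X Y) : Tangled Y X := by
  obtain ⟨ℓ, hℓ, f, hf, hint⟩ := h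
  exact ⟨f, hf, ℓ, hℓ, hint.symm⟩

theorem Tangled.festoonIval_inter_nonempty (h : Tangled X Y) :
    (festoonIval X ∩ festoonIval Y).Nonempty := by
  obtain ⟨ℓ, hℓ, f, hf, hint⟩ := h
  obtain ⟨u, hu, h1, h2⟩ := hint.exists_incident_mem_Icc
  exact ⟨u, hu.mem_festoonIval hℓ, mem_festoonIval hf h1 h2⟩

theorem Tangled.festoonIval_ssubset (h : Tangled X Y)
    (hlam : festoonIval X ⊆ festoonIval Y ∨ festoonIval Y ⊆ festoonIval X ∨
      festoonIval X ∩ festoonIval Y = ∅)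
    (hYX : ¬ festoonIval Y ⊆ festoonIval X) : festoonIval X ⊂ festoonIval Y := by
  rcases hlam with hXY | hYX' | hdisj
  · exact ssubset_of_subset_not_subset hXY hYX
  · exact absurd hYX' hYX
  · exact absurd hdisj h.festoonIval_inter_nonempty.ne_empty

/-- Both intervals start at the leftmost left endpoint, so equal intervals share an endpoint. -/
theorem tangled_of_festoonIval_eq (hX : X.Nonempty) (hY : Y.Nonempty)
    (h : festoonIval X = festoonIval Y) : Tangled X Y := by
  obtain ⟨x, hx, hxmin⟩ := X.exists_min_image Link.lo hX
  obtain ⟨y, hy, hymin⟩ := Y.exists_min_image Link.lo hY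
  obtain ⟨y', hy', hy'x⟩ := (h ▸ lo_mem_festoonIval hx : x.lo ∈ festoonIval Y).1
  obtain ⟨x', hx', hx'y⟩ := (h ▸ lo_mem_festoonIval hy : y.lo ∈ festoonIval X).1
  exact ⟨x, hx, y, hy, Or.inl (Or.inl (le_antisymm ((hxmin x' hx').trans hx'y)
    ((hymin y' hy').trans hy'x)))⟩

end Interval

section Connectivity

variable {m : ℕ} {a b c x y : Link m} {w : Fin m} {X Y K : Finset (Link m)}

theorem IntersectsIn.symm (h : IntersectsIn K a b) : IntersectsIn K b a :=
  ⟨h.2.1, h.1, h.2.2.symm⟩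

theorem ConnLinkSet.reflTransGen (hX : ConnLinkSet X) (hXK : X ⊆ K) (ha : a ∈ X)
    (hb : b ∈ X) : ReflTransGen (IntersectsIn K) a b :=
  ReflTransGen.mono (fun _ _ h => ⟨hXK h.1, hXK h.2.1, h.2.2⟩) _ _ (hX a ha b hb)

theorem IsFestoon.connLinkSet (hX : IsFestoon X) : ConnLinkSet X := by
  obtain ⟨p, hp, f, hf, rfl⟩ := hX
  let f' : ℕ → Link m := fun i => f ⟨min i (p - 1), by omega⟩
  have hf' : ∀ i : Fin p, f' i = f i := fun i => congrArg f (Fin.ext (min_eq_left (by omega)))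
  have hadj : ∀ i, i + 1 < p → IntersectsIn (Finset.univ.image f) (f' i) (f' (i + 1)) :=
    fun i hi => ⟨Finset.mem_image_of_mem f (Finset.mem_univ _),
      Finset.mem_image_of_mem f (Finset.mem_univ _), hf.2.1 _ _ (by dsimp only; omega)⟩
  intro ℓ hℓ ℓ' hℓ'
  obtain ⟨i, -, rfl⟩ := Finset.mem_image.mp hℓ
  obtain ⟨j, -, rfl⟩ := Finset.mem_image.mp hℓ'
  have hij :
      ReflTransGen (fun i j => IntersectsIn (Finset.univ.image f) (f' i) (f' j)) (i : ℕ) j :=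
    reflTransGen_of_succ _ (fun k hk => hadj k (by simp only [Set.mem_Ico] at hk; omega))
      (fun k hk => (hadj k (by simp only [Set.mem_Ico] at hk; omega)).symm)
  simpa only [Function.onFun, hf'] using ReflTransGen.lift f' (p := IntersectsIn _) le_rfl _ _ hij

/-- Walking along `H[X]` from a link starting left of `w` to one ending right of it, some
link must cover `w`: intersecting links overlap. -/
theorem ConnLinkSet.exists_mem_Icc (hX : ConnLinkSet X) (hw : w ∈ festoonIval X) :
    ∃ x ∈ X, x.lo ≤ w ∧ w ≤ x.hi := by
  obtain ⟨⟨ℓ, hℓ, hlo⟩, ⟨ℓ', hℓ', hhi⟩⟩ := hw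
  suffices key : ∀ z, ReflTransGen (IntersectsIn X) ℓ z →
      (∃ x ∈ X, x.lo ≤ w ∧ w ≤ x.hi) ∨ z.hi < w from
    (key ℓ' (hX ℓ hℓ ℓ' hℓ')).resolve_right hhi.not_gt
  intro z hz
  induction hz with
  | refl => exact (lt_or_ge ℓ.hi w).symm.imp_left fun h => ⟨ℓ, hℓ, hlo, h⟩
  | tail _ hzz' ih =>
    refine ih.elim Or.inl fun hz => (lt_or_ge _ w).symm.imp_left fun h => ?_
    exact ⟨_, hzz'.2.1, (hzz'.2.2.lo_le_hi.trans hz.le), h⟩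

theorem ConnLinkSet.exists_strictly_inside (hY : ConnLinkSet Y) (hc : ∀ y ∈ Y, ¬ Intersects c y)
    (ha : Intersects c a) (hlo : a.lo ∈ festoonIval Y) (hhi : a.hi ∈ festoonIval Y) :
    ∃ y ∈ Y, y.lo < c.lo ∧ c.hi < y.hi := by
  obtain ⟨u, hu, h1, h2⟩ := ha.exists_incident_mem_Icc
  obtain ⟨y, hy, hy1, hy2⟩ := hY.exists_mem_Icc ((ordConnected_festoonIval Y).out hlo hhi ⟨h1, h2⟩)
  exact ⟨y, hy, strictly_inside_of_not_intersects (hc y hy) hu hy1 hy2⟩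

/-- Once one link of `X` lies strictly inside a link of `Y`, connectivity of `H[X]` carries
every link of `X` strictly inside some link of `Y`. -/
theorem ConnLinkSet.festoonIval_subset (hX : ConnLinkSet X) (hY : ConnLinkSet Y)
    (hXY : ¬ Tangled X Y) (hx : x ∈ X) (hy : y ∈ Y) (hxy : y.lo < x.lo ∧ x.hi < y.hi) :
    festoonIval X ⊆ festoonIval Y := by
  have inside : ∀ x' ∈ X, ∃ y ∈ Y, y.lo < x'.lo ∧ x'.hi < y.hi := by
    intro x' hx'
    induction hX x hx x' hx' with
    | refl => exact ⟨y, hy, hxy⟩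
    | tail _ hzz' ih =>
      obtain ⟨y, hy, h1, h2⟩ := ih hzz'.1
      exact hY.exists_strictly_inside (fun y hy h => hXY ⟨_, hzz'.2.1, y, hy, h⟩)
        hzz'.2.2.symm (mem_festoonIval hy h1.le ((Link.lo_lt_hi _).le.trans h2.le))
        (mem_festoonIval hy (h1.le.trans (Link.lo_lt_hi _).le) h2.le)
  rintro w ⟨⟨ℓ, hℓ, hlo⟩, ⟨ℓ', hℓ', hhi⟩⟩
  obtain ⟨y, hy, hy1, -⟩ := inside ℓ hℓ
  obtain ⟨y', hy', -, hy'2⟩ := inside ℓ' hℓ'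
  exact ⟨⟨y, hy, hy1.le.trans hlo⟩, ⟨y', hy', hhi.trans hy'2.le⟩⟩

end Connectivity

section Nesting

variable {m : ℕ} {A B C : Finset (Link m)}

/-- A link of `C` meeting `A` but not `B` lies strictly inside a link of `B`, which drags all
of `I_C` into `I_B`. -/
theorem tangled_of_festoonIval_subset_subset (hB : ConnLinkSet B) (hC : ConnLinkSet C)
    (hAB : festoonIval A ⊆ festoonIval B) (hBC : festoonIval B ⊆ festoonIval C)
    (hAC : Tangled A C) : Tangled B C := by
  by_contra hnBC
  obtain ⟨a, ha, c, hc, hac⟩ := hAC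
  obtain ⟨b, hb, hcb⟩ := hB.exists_strictly_inside (fun b hb h => hnBC ⟨b, hb, c, hc, h.symm⟩)
    hac.symm (hAB (lo_mem_festoonIval ha)) (hAB (hi_mem_festoonIval ha))
  have hCB := hC.festoonIval_subset hB (fun h => hnBC h.symm) hc hb hcb
  exact hnBC (tangled_of_festoonIval_eq ⟨b, hb⟩ ⟨c, hc⟩ (hBC.antisymm hCB))

theorem tangled_of_tangled_of_festoonIval_subset (hB : ConnLinkSet B) (hC : ConnLinkSet C)
    (hlam : festoonIval B ⊆ festoonIval C ∨ festoonIval C ⊆ festoonIval B ∨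
      festoonIval B ∩ festoonIval C = ∅)
    (hAB : Tangled A B) (hAC : Tangled A C) (hAB' : festoonIval A ⊆ festoonIval B)
    (hAC' : festoonIval A ⊆ festoonIval C) : Tangled B C := by
  rcases hlam with h | h | h
  · exact tangled_of_festoonIval_subset_subset hB hC hAB' h hAC
  · exact (tangled_of_festoonIval_subset_subset hC hB hAC' h hAB).symm
  · obtain ⟨a, ha, -⟩ := hAB
    exact absurd h (Set.nonempty_iff_ne_empty.mp
      ⟨a.lo, hAB' (lo_mem_festoonIval ha), hAC' (lo_mem_festoonIval ha)⟩)

end Nesting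

section Arborescence

variable {m : ℕ} {F : Finset (DLink m)} {d e : DLink m} {v w y z : Fin m}

theorem IsCut.zero_notMem [NeZero m] {C : Finset (Fin m)} (hC : IsCut C) : (0 : Fin m) ∉ C := by
  obtain ⟨a, b, ha, -, rfl⟩ := hC
  simpa using ha.ne'

theorem exists_cut_of_shortening [NeZero m] (hF : NonShortenable F) (hd : d ∈ F)
    (hsh : IsShortening e d) (hne : e ≠ d) :
    ∃ C, IsCut C ∧ e.tail ∈ C ∧ ∀ d' ∈ F, d' ≠ d → d'.head ∈ C → d'.tail ∈ C := by
  have hnot := hF.2.2 d hd e hsh hne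
  simp only [IsDirSolution, not_forall, not_exists, not_and] at hnot
  obtain ⟨C, hC, hunc⟩ := hnot
  have hother : ∀ d' ∈ F, d' ≠ d → ¬ DCovers d' C := fun d' hd' hne' =>
    hunc d' (Finset.mem_insert_of_mem (Finset.mem_erase.mpr ⟨hne', hd'⟩))
  have hdC : DCovers d C := by
    obtain ⟨d', hd', hcov⟩ := hF.1 C hC
    by_cases h : d' = d
    · exact h ▸ hcov
    · exact absurd hcov (hother d' hd' h)
  refine ⟨C, hC, ?_, fun d' hd' hne' hh => by_contra fun ht => hother d' hd' hne' ⟨ht, hh⟩⟩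
  by_contra ht
  exact hunc e (Finset.mem_insert_self _ _) ⟨ht, hsh.1 ▸ hdC.2⟩

theorem Descend.through_of_unique_entry {C : Finset (Fin m)} (hy : y ∉ C)
    (hC : ∀ d' ∈ F, d' ≠ d → d'.head ∈ C → d'.tail ∈ C) (h : Descend F y z) (hz : z ∈ C) :
    Descend F y d.head ∧ Descend F d.head z := by
  induction h with
  | refl => exact absurd hz hy
  | tail hyx hxz ih =>
    obtain ⟨d', hd', rfl, rfl⟩ := hxz
    by_cases hd : d' = d
    · subst hd
      exact ⟨ReflTransGen.tail hyx ⟨d', hd', rfl, rfl⟩, ReflTransGen.refl⟩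
    · obtain ⟨h1, h2⟩ := ih (hC d' hd' hd hz)
      exact ⟨h1, ReflTransGen.tail h2 ⟨d', hd', rfl, rfl⟩⟩

theorem descend_of_shortening [NeZero m] (hF : NonShortenable F) (hd : d ∈ F)
    (hsh : IsShortening e d) (hne : e ≠ d) (he : Descend F 0 e.tail) :
    Descend F 0 d.head ∧ Descend F d.head e.tail := by
  obtain ⟨C, hC, heC, hclosed⟩ := exists_cut_of_shortening hF hd hsh hne
  exact he.through_of_unique_entry hC.zero_notMem hclosed heC

/-- Let `A` be the set of vertices unreachable from the root, `μ = min A`, and `[μ, t]` a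
maximal interval inside `A`. The link entering the cut `[μ, t]` has its tail in `A` beyond
`t`, hence passes over a reachable vertex `x`; shortening it to start at `x` would make its
head reachable. -/
theorem NonShortenable.descend_zero [NeZero m] (hF : NonShortenable F) (z : Fin m) :
    Descend F 0 z := by
  classical
  by_contra hz
  set A := Finset.univ.filter fun y => ¬ Descend F 0 y
  have hmemA : ∀ y, y ∈ A ↔ ¬ Descend F 0 y := by simp [A]
  have hclosed : ∀ d ∈ F, d.head ∈ A → d.tail ∈ A := fun d hd hh =>
    (hmemA _).2 fun ht => (hmemA _).1 hh (ReflTransGen.tail ht ⟨d, hd, rfl, rfl⟩)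
  obtain ⟨μ, hμA, hμmin⟩ := A.exists_min_image id ⟨z, (hmemA z).2 hz⟩
  have hμ : 0 < μ := Fin.pos_iff_ne_zero.mpr fun h => (hmemA μ).1 hμA (h ▸ ReflTransGen.refl)
  obtain ⟨t, ht, htmax⟩ := (Finset.univ.filter fun t => μ ≤ t ∧ Finset.Icc μ t ⊆ A).exists_max_image
    id ⟨μ, by simp [hμA]⟩
  simp only [Finset.mem_filter, Finset.mem_univ, true_and, id] at ht htmax
  obtain ⟨d, hd, hdt, hdh⟩ := hF.1 _ ⟨μ, t, hμ, ht.1, rfl⟩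
  have hdA : d.tail ∈ A := hclosed d hd (ht.2 hdh)
  have htd : t < d.tail := by
    by_contra h
    exact hdt (Finset.mem_Icc.mpr ⟨hμmin _ hdA, not_lt.mp h⟩)
  obtain ⟨x, hx, hxA⟩ : ∃ x ∈ Finset.Icc μ d.tail, x ∉ A := by
    by_contra! h
    exact (htmax d.tail ⟨(hμmin _ hdA), h⟩).not_gt htd
  have htx : t < x := by
    by_contra h
    exact hxA (ht.2 (Finset.mem_Icc.mpr ⟨(Finset.mem_Icc.mp hx).1, not_lt.mp h⟩))
  have hxd : x < d.tail := (Finset.mem_Icc.mp hx).2.lt_of_ne fun h => hxA (h ▸ hdA)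
  have hhx : d.head < x := ((Finset.mem_Icc.mp hdh).2.trans_lt htx)
  let e : DLink m := ⟨x, d.head, hhx.ne'⟩
  have hsh : IsShortening e d :=
    ⟨rfl, (min_le_right _ _).trans hhx.le, hxd.le.trans (le_max_left _ _)⟩
  have hne : e ≠ d := fun h => hxd.ne (congrArg DLink.tail h)
  exact (hmemA _).1 (ht.2 hdh) (descend_of_shortening hF hd hsh hne
    (not_not.mp ((hmemA x).not.mp hxA))).1

theorem Descend.exists_link_across (h : Descend F v y) (hw : ¬ Descend F v w)
    (h1 : min v y < w) (h2 : w < max v y) :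
    ∃ d ∈ F, Descend F v d.head ∧ min d.tail d.head < w ∧ w < max d.tail d.head := by
  induction h with
  | refl =>
    simp only [min_self, max_self] at h1 h2
    exact absurd (h1.trans h2) (lt_irrefl _)
  | tail hvx hxy ih =>
    obtain ⟨d, hd, rfl, rfl⟩ := hxy
    by_cases hx : min v d.tail < w ∧ w < max v d.tail
    · exact ih hx.1 hx.2
    · refine ⟨d, hd, ReflTransGen.tail hvx ⟨d, hd, rfl, rfl⟩, ?_⟩
      have hwx : w ≠ d.tail := fun h => hw (h ▸ hvx)
      simp only [min_lt_iff, lt_max_iff, not_and_or, not_or, not_lt] at hx h1 h2 ⊢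
      simp only [Fin.lt_def, Fin.le_def, ne_eq, Fin.ext_iff] at hx h1 h2 hwx ⊢
      omega

theorem NonShortenable.ordConnected_descend [NeZero m] (hF : NonShortenable F) (v : Fin m) :
    {u | Descend F v u}.OrdConnected := by
  refine ⟨fun a ha b hb w hw => by_contra fun hwv => ?_⟩
  have hvw : v ≠ w := fun h => hwv (h ▸ ReflTransGen.refl)
  obtain ⟨d, hd, hdv, h1, h2⟩ : ∃ d ∈ F, Descend F v d.head ∧
      min d.tail d.head < w ∧ w < max d.tail d.head := by
    rcases hvw.lt_or_gt with h | h
    · exact Descend.exists_link_across hb hwv ((min_le_left _ _).trans_lt h)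
        ((hw.2.lt_of_ne fun h => hwv (h ▸ hb)).trans_le (le_max_right _ _))
    · exact Descend.exists_link_across ha hwv
        ((min_le_right _ _).trans_lt (hw.1.lt_of_ne fun h => hwv (h ▸ ha)))
        (h.trans_le (le_max_left _ _))
  have hwd : w ≠ d.tail := by
    rintro rfl
    simp only [min_lt_iff, lt_irrefl, false_or, lt_max_iff] at h1 h2
    exact lt_asymm h1 h2
  let e : DLink m := ⟨w, d.head, fun h => hwv (h ▸ hdv)⟩
  have hsh : IsShortening e d := ⟨rfl, h1.le, h2.le⟩
  have hne : e ≠ d := fun h => hwd (congrArg DLink.tail h)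
  exact hwv (hdv.trans (descend_of_shortening hF hd hsh hne (hF.descend_zero w)).2)

end Arborescence

section Chain

variable {m : ℕ} {F : Finset (DLink m)} {v : Fin m} {𝒳 : Finset (Finset (Link m))} {P i j : ℕ}
  {g : ℕ → Finset (Link m)}

/-- Only `g 0, …, g P` matter, and festoons may repeat. -/
structure IsConnectingChain (F : Finset (DLink m)) (v : Fin m) (𝒳 : Finset (Finset (Link m)))
    (P : ℕ) (g : ℕ → Finset (Link m)) : Prop where
  mem : ∀ k ≤ P, g k ∈ 𝒳
  tangled : ∀ k < P, Tangled (g k) (g (k + 1))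
  incident_start : ∃ ℓ ∈ g 0, ℓ.Incident v
  good_end : ∃ ℓ ∈ g P, ∃ u, ℓ.Incident u ∧ VGood F v u

theorem exists_isConnectingChain (h : ConnectsToGood F v 𝒳) :
    ∃ P g, IsConnectingChain F v 𝒳 P g := by
  obtain ⟨w, hw, ℓ, hℓ, f, hf, hℓv, hfw, hpath⟩ := h
  suffices key : ∀ z, ReflTransGen (IntersectsIn (𝒳.biUnion id)) ℓ z →
      ∃ (P : ℕ) (g : ℕ → Finset (Link m)),
      (∀ k ≤ P, g k ∈ 𝒳) ∧ (∀ k < P, Tangled (g k) (g (k + 1))) ∧ ℓ ∈ g 0 ∧ z ∈ g P by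
    obtain ⟨P, g, hmem, htan, h0, hP⟩ := key f hpath
    exact ⟨P, g, hmem, htan, ⟨ℓ, h0, hℓv⟩, ⟨f, hP, w, hfw, hw⟩⟩
  intro z hz
  induction hz with
  | refl =>
    obtain ⟨X, hX, hℓX⟩ := Finset.mem_biUnion.mp hℓ
    exact ⟨0, fun _ => X, fun _ _ => hX, fun _ h => absurd h (Nat.not_lt_zero _), hℓX, hℓX⟩
  | tail _ hzz' ih =>
    obtain ⟨P, g, hmem, htan, h0, hP⟩ := ih
    obtain ⟨X, hX, hz'X⟩ := Finset.mem_biUnion.mp hzz'.2.1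
    refine ⟨P + 1, fun k => if k ≤ P then g k else X, fun k hk => ?_, fun k hk => ?_,
      by simpa using h0, by simpa using hz'X⟩
    · dsimp only
      split_ifs with hkP
      exacts [hmem k hkP, hX]
    · rcases (Nat.lt_succ_iff.mp hk).lt_or_eq with hk | rfl
      · simpa [hk.le, Nat.succ_le_of_lt hk] using htan k hk
      · have : Tangled (g k) X := ⟨_, hP, _, hz'X, hzz'.2.2⟩
        simpa using this

theorem IsConnectingChain.connectsToGood (hconn : ∀ X ∈ 𝒳, ConnLinkSet X)
    (h : IsConnectingChain F v 𝒳 P g) : ConnectsToGood F v 𝒳 := by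
  obtain ⟨ℓ, hℓ, hℓv⟩ := h.incident_start
  obtain ⟨f, hf, u, hfu, hu⟩ := h.good_end
  have hsub : ∀ k ≤ P, g k ⊆ 𝒳.biUnion id := fun k hk =>
    Finset.subset_biUnion_of_mem id (h.mem k hk)
  have reach : ∀ k ≤ P, ∀ x ∈ g k, ReflTransGen (IntersectsIn (𝒳.biUnion id)) ℓ x := by
    intro k
    induction k with
    | zero =>
      exact fun hP x hx => (hconn _ (h.mem 0 hP)).reflTransGen (hsub 0 hP) hℓ hx
    | succ k ih =>
      intro hk x hx
      obtain ⟨a, ha, b, hb, hab⟩ := h.tangled k hk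
      exact ((ih (by omega) a ha).tail ⟨hsub k (by omega) ha, hsub _ hk hb, hab⟩).trans
        ((hconn _ (h.mem _ hk)).reflTransGen (hsub _ hk) hb hx)
  exact ⟨u, hu, ℓ, hsub 0 (Nat.zero_le _) hℓ, f, hsub P le_rfl hf, hℓv, hfu, reach P le_rfl f hf⟩

theorem IsConnectingChain.restrict (h : IsConnectingChain F v 𝒳 P g) :
    IsConnectingChain F v (Finset.univ.image fun i : Fin (P + 1) => g i) P g :=
  { h with mem := fun k hk => Finset.mem_image.mpr ⟨⟨k, by omega⟩, Finset.mem_univ _, rfl⟩ }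

theorem IsConnectingChain.drop (h : IsConnectingChain F v 𝒳 P g) (hj : j ≤ P)
    (hv : ∃ ℓ ∈ g j, ℓ.Incident v) : IsConnectingChain F v 𝒳 (P - j) fun k => g (j + k) where
  mem k hk := h.mem _ (by omega)
  tangled k hk := h.tangled _ (by omega)
  incident_start := hv
  good_end := by simpa [Nat.add_sub_cancel' hj] using h.good_end

theorem IsConnectingChain.take (h : IsConnectingChain F v 𝒳 P g) (hj : j ≤ P)
    (hgood : ∃ ℓ ∈ g j, ∃ u, ℓ.Incident u ∧ VGood F v u) : IsConnectingChain F v 𝒳 j g where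
  mem k hk := h.mem k (hk.trans hj)
  tangled k hk := h.tangled k (hk.trans_le hj)
  incident_start := h.incident_start
  good_end := hgood

theorem IsConnectingChain.shortcut (h : IsConnectingChain F v 𝒳 P g) (hij : i < j)
    (hjP : j ≤ P) (ht : Tangled (g i) (g j)) :
    IsConnectingChain F v 𝒳 (P - (j - i - 1))
      fun k => if k ≤ i then g k else g (k + (j - i - 1)) where
  mem k hk := by
    split_ifs
    exacts [h.mem k (by omega), h.mem _ (by omega)]
  tangled k hk := by
    rcases lt_trichotomy k i with hki | rfl | hki
    · simpa [hki.le, Nat.succ_le_of_lt hki] using h.tangled k (by omega)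
    · simpa [show k + 1 + (j - k - 1) = j by omega] using ht
    · simpa [show ¬ k ≤ i by omega, show ¬ k + 1 ≤ i by omega,
        show k + 1 + (j - i - 1) = k + (j - i - 1) + 1 by omega] using
        h.tangled (k + (j - i - 1)) (by omega)
  incident_start := by simpa using h.incident_start
  good_end := by
    simpa [show ¬ P - (j - i - 1) ≤ i by omega,
      show P - (j - i - 1) + (j - i - 1) = P by omega] using h.good_end

theorem IsConnectingChain.eq_image (hconn : ∀ X ∈ 𝒳, ConnLinkSet X)
    (hmin : ∀ 𝒴, 𝒴 ⊂ 𝒳 → ¬ ConnectsToGood F v 𝒴) (h : IsConnectingChain F v 𝒳 P g) :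
    𝒳 = Finset.univ.image fun i : Fin (P + 1) => g i := by
  have hsub : (Finset.univ.image fun i : Fin (P + 1) => g i) ⊆ 𝒳 := by
    intro X hX
    obtain ⟨i, -, rfl⟩ := Finset.mem_image.mp hX
    exact h.mem i (by omega)
  by_contra hne
  exact hmin _ (hsub.ssubset_of_ne (Ne.symm hne))
    (h.restrict.connectsToGood fun X hX => hconn X (hsub hX))

end Chain

section ShortestChain

variable {m : ℕ} {F : Finset (DLink m)} {v : Fin m} {𝒳 : Finset (Finset (Link m))} {P i j : ℕ}
  {g : ℕ → Finset (Link m)}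

structure IsShortestConnectingChain (F : Finset (DLink m)) (v : Fin m)
    (𝒳 : Finset (Finset (Link m))) (P : ℕ) (g : ℕ → Finset (Link m)) : Prop
    extends IsConnectingChain F v 𝒳 P g where
  le_length : ∀ P' g', IsConnectingChain F v 𝒳 P' g' → P ≤ P'

theorem exists_isShortestConnectingChain (h : ConnectsToGood F v 𝒳) :
    ∃ P g, IsShortestConnectingChain F v 𝒳 P g := by
  classical
  have hex := exists_isConnectingChain h
  obtain ⟨g, hg⟩ := Nat.find_spec hex
  exact ⟨_, g, hg, fun _ g' h => Nat.find_min' hex ⟨g', h⟩⟩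

theorem IsShortestConnectingChain.eq_zero_of_incident (h : IsShortestConnectingChain F v 𝒳 P g)
    (hj : j ≤ P) (hv : ∃ ℓ ∈ g j, ℓ.Incident v) : j = 0 := by
  have := h.le_length _ _ (h.drop hj hv)
  omega

theorem IsShortestConnectingChain.eq_of_incident_vGood (h : IsShortestConnectingChain F v 𝒳 P g)
    (hj : j ≤ P) (hgood : ∃ ℓ ∈ g j, ∃ u, ℓ.Incident u ∧ VGood F v u) : j = P :=
  (h.le_length _ _ (h.take hj hgood)).antisymm' hj

theorem IsShortestConnectingChain.not_tangled (h : IsShortestConnectingChain F v 𝒳 P g)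
    (hij : i + 1 < j) (hjP : j ≤ P) : ¬ Tangled (g i) (g j) := fun ht => by
  have := h.le_length _ _ (h.shortcut (by omega) hjP ht)
  omega

theorem IsShortestConnectingChain.tangled_iff (h : IsShortestConnectingChain F v 𝒳 P g) (hi : i ≤ P)
    (hj : j ≤ P) (hij : i ≠ j) : Tangled (g i) (g j) ↔ i + 1 = j ∨ j + 1 = i := by
  refine ⟨fun ht => by_contra fun hne => ?_, ?_⟩
  · rcases hij.lt_or_gt with hlt | hlt
    · exact h.not_tangled (by omega) hj ht
    · exact h.not_tangled (by omega) hi ht.symm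
  · rintro (rfl | rfl)
    exacts [h.tangled i (by omega), (h.tangled j (by omega)).symm]

theorem IsShortestConnectingChain.festoonIval_subset_descend [NeZero m] (hF : NonShortenable F)
    (h : IsShortestConnectingChain F v 𝒳 P g) (hk : i < P) :
    festoonIval (g i) ⊆ {u | Descend F v u} :=
  festoonIval_subset_of_incident (hF.ordConnected_descend v) fun ℓ hℓ u hu =>
    not_not.mp fun hgood => hk.ne (h.eq_of_incident_vGood hk.le ⟨ℓ, hℓ, u, hu, hgood⟩)

/-- Downwards from the end: `I(g P)` holds a `v`-good vertex that `I(g (P - 1))` lacks, and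
`I(g (k + 1)) ⊆ I(g k)` together with `I(g (k + 1)) ⊆ I(g (k + 2))` would tangle the
chord `g k, g (k + 2)`. Laminarity turns each non-inclusion into a strict inclusion. -/
theorem IsShortestConnectingChain.festoonIval_ssubset_succ [NeZero m] (hF : NonShortenable F)
    (hconn : ∀ X ∈ 𝒳, ConnLinkSet X)
    (hlam : ∀ X ∈ 𝒳, ∀ Y ∈ 𝒳, festoonIval X ⊆ festoonIval Y ∨ festoonIval Y ⊆ festoonIval X ∨
      festoonIval X ∩ festoonIval Y = ∅)
    (h : IsShortestConnectingChain F v 𝒳 P g) :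
    ∀ k < P, festoonIval (g k) ⊂ festoonIval (g (k + 1)) := by
  have hstep : ∀ k < P, ¬ festoonIval (g (k + 1)) ⊆ festoonIval (g k) →
      festoonIval (g k) ⊂ festoonIval (g (k + 1)) := fun k hk =>
    (h.tangled k hk).festoonIval_ssubset (hlam _ (h.mem k hk.le) _ (h.mem _ hk))
  suffices ∀ t k, k + 1 + t = P → festoonIval (g k) ⊂ festoonIval (g (k + 1)) from
    fun k hk => this (P - k - 1) k (by omega)
  intro t
  induction t with
  | zero =>
    intro k hk
    obtain rfl : P = k + 1 := hk.symm
    obtain ⟨ℓ, hℓ, u, hu, hgood⟩ := h.good_end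
    exact hstep k (by omega) fun hsub =>
      hgood (h.festoonIval_subset_descend hF (by omega) (hsub (hu.mem_festoonIval hℓ)))
  | succ t ih =>
    intro k hk
    refine hstep k (by omega) fun hsub => h.not_tangled (i := k) (j := k + 2)
      (by omega) (by omega) ?_
    exact tangled_of_tangled_of_festoonIval_subset (hconn _ (h.mem k (by omega)))
      (hconn _ (h.mem _ (by omega))) (hlam _ (h.mem k (by omega)) _ (h.mem _ (by omega)))
      (h.tangled k (by omega)).symm (h.tangled (k + 1) (by omega)) hsub
      (ih (k + 1) (by omega)).subset

end ShortestChain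

theorem minimal_connecting_festoon_chain_general {n : ℕ}
    (F : Finset (DLink (n + 3))) (hF : NonShortenable F)
    (v : Fin (n + 3))
    (𝒳 : Finset (Finset (Link (n + 3))))
    (hfest : ∀ X ∈ 𝒳, IsFestoon X)
    (hlam : ∀ X ∈ 𝒳, ∀ Y ∈ 𝒳,
      festoonIval X ⊆ festoonIval Y ∨ festoonIval Y ⊆ festoonIval X ∨
        festoonIval X ∩ festoonIval Y = ∅)
    (hconn : ConnectsToGood F v 𝒳)
    (hmin : ∀ 𝒴 : Finset (Finset (Link (n + 3))), 𝒴 ⊂ 𝒳 →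
      ¬ ConnectsToGood F v 𝒴) :
    ∃ p : ℕ, ∃ g : Fin p → Finset (Link (n + 3)),
      𝒳 = Finset.image g Finset.univ ∧
      (∀ i j : Fin p, i < j → festoonIval (g i) ⊂ festoonIval (g j)) ∧
      (∀ i j : Fin p, i ≠ j →
        (Tangled (g i) (g j) ↔ ((i : ℕ) + 1 = (j : ℕ) ∨ (j : ℕ) + 1 = (i : ℕ)))) ∧
      (∀ i : Fin p, (∃ ℓ ∈ g i, Link.Incident ℓ v) ↔ (i : ℕ) = 0) ∧
      (∀ i : Fin p,
        (∃ ℓ ∈ g i, ∃ u : Fin (n + 3), Link.Incident ℓ u ∧ VGood F v u) ↔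
          (i : ℕ) = p - 1) := by
  have hconnX : ∀ X ∈ 𝒳, ConnLinkSet X := fun X hX => (hfest X hX).connLinkSet
  obtain ⟨P, g, hg⟩ := exists_isShortestConnectingChain hconn
  have hmono : StrictMonoOn (fun k => festoonIval (g k)) (Set.Iic P) :=
    strictMonoOn_Iic_of_lt_succ (hg.festoonIval_ssubset_succ hF hconnX hlam)
  have hle (i : Fin (P + 1)) : (i : ℕ) ≤ P := Nat.lt_succ_iff.mp i.2
  refine ⟨P + 1, fun i => g i, hg.eq_image hconnX hmin,
    fun i j hij => hmono (hle i) (hle j) hij,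
    fun i j hij => hg.tangled_iff (hle i) (hle j) (Fin.val_ne_of_ne hij),
    fun i => ⟨hg.eq_zero_of_incident (hle i), fun h => ?_⟩,
    fun i => ⟨hg.eq_of_incident_vGood (hle i), fun h => ?_⟩⟩
  · simpa [h] using hg.incident_start
  · simpa [h] using hg.good_end

/-- let `F` be a non-shortenable directed WRAP solution,
`v ≠ r`, and `𝒳` a finite set of pairwise disjoint festoons with laminar
festoon intervals that connects `v` to a `v`-good vertex, no proper subset of
which does so.  Then the festoons of `𝒳` can be numbered `X_0 ≺ X_1 ≺ ⋯ ≺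
X_{p-1}` (strictly increasing festoon intervals); moreover (1) two distinct
festoons `X_i, X_j` are tangled iff `|i − j| = 1`, (2) `X_0` is the only
festoon of `𝒳` containing a link incident to `v`, and (3) `X_{p-1}` is the
only festoon of `𝒳` containing a link incident to a `v`-good vertex. -/
theorem minimal_connecting_festoon_chain {n : ℕ}
    (F : Finset (DLink (n + 3))) (hF : NonShortenable F)
    (v : Fin (n + 3)) (hv : v ≠ 0)
    (𝒳 : Finset (Finset (Link (n + 3))))
    (hfest : ∀ X ∈ 𝒳, IsFestoon X)
    (hdisj : ∀ X ∈ 𝒳, ∀ Y ∈ 𝒳, X ≠ Y → Disjoint X Y)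
    (hlam : ∀ X ∈ 𝒳, ∀ Y ∈ 𝒳,
      festoonIval X ⊆ festoonIval Y ∨ festoonIval Y ⊆ festoonIval X ∨
        festoonIval X ∩ festoonIval Y = ∅)
    (hconn : ConnectsToGood F v 𝒳)
    (hmin : ∀ 𝒴 : Finset (Finset (Link (n + 3))), 𝒴 ⊂ 𝒳 →
      ¬ ConnectsToGood F v 𝒴) :
    ∃ p : ℕ, ∃ g : Fin p → Finset (Link (n + 3)),
      𝒳 = Finset.image g Finset.univ ∧
      (∀ i j : Fin p, i < j → festoonIval (g i) ⊂ festoonIval (g j)) ∧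
      (∀ i j : Fin p, i ≠ j →
        (Tangled (g i) (g j) ↔ ((i : ℕ) + 1 = (j : ℕ) ∨ (j : ℕ) + 1 = (i : ℕ)))) ∧
      (∀ i : Fin p, (∃ ℓ ∈ g i, Link.Incident ℓ v) ↔ (i : ℕ) = 0) ∧
      (∀ i : Fin p,
        (∃ ℓ ∈ g i, ∃ u : Fin (n + 3), Link.Incident ℓ u ∧ VGood F v u) ↔
          (i : ℕ) = p - 1) :=
  minimal_connecting_festoon_chain_general F hF v 𝒳 hfest hlam hconn hmin
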